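/- Let T be a rooted tree in which every vertex has at most Δ children, where Δ ≥ 2, and let L(T) be the number of leaves of T. Then ρ_C(T) ≥ (L(T) − 1)/(Δ − 1), with equality if and only if T is a complete Δ-ary tree, i.e. every internal vertex has exactly Δ children and all leaves lie on the same level. -/

import Mathlib

open Matrix

/-- A rooted tree on a finite vertex type `V`, encoded by its root and the
parent function: the root is its own parent, and iterating the parent function
from any vertex eventually reaches the root.  (These conditions force the graph
whose edges join each non-root vertex to its parent to be a tree.) -/
structure TreeOn (V : Type) [Fintype V] [DecidableEq V] where
  root : V
  parent : V → V
  parent_root : parent root = root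
  reaches : ∀ v, ∃ k, parent^[k] v = root

namespace TreeOn

variable {V : Type} [Fintype V] [DecidableEq V]

/-- `u` is a (weak) ancestor of `v`: some iterate of the parent function sends
`v` to `u`.  (Any ancestor is reached within `Fintype.card V` steps, so the
bound makes the predicate decidable without changing its meaning.) -/
def IsAncestor (T : TreeOn V) (u v : V) : Prop :=
  ∃ k, k ≤ Fintype.card V ∧ T.parent^[k] v = u

instance (T : TreeOn V) (u v : V) : Decidable (T.IsAncestor u v) := by
  have h : T.IsAncestor u v ↔ ∃ k ∈ Finset.range (Fintype.card V + 1), T.parent^[k] v = u := by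
    simp [IsAncestor, Nat.lt_succ_iff]
  rw [h]; infer_instance

/-- The level of a vertex: its distance to the root. -/
def level (T : TreeOn V) (v : V) : ℕ := Nat.find (T.reaches v)

/-- The ancestral level `ℓ(v ∨ w)`: the level of the lowest common ancestor
of `v` and `w`, i.e. the greatest level of a common ancestor. -/
def lcaLevel (T : TreeOn V) (v w : V) : ℕ :=
  (Finset.univ.filter fun u => T.IsAncestor u v ∧ T.IsAncestor u w).sup T.level

/-- A leaf is a vertex with no children. -/
def IsLeaf (T : TreeOn V) (v : V) : Prop := ∀ u, T.parent u = v → u = v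

instance (T : TreeOn V) : DecidablePred T.IsLeaf := fun v =>
  inferInstanceAs (Decidable (∀ u, T.parent u = v → u = v))

/-- The type of leaves of `T`. -/
abbrev Leaf (T : TreeOn V) := {v : V // T.IsLeaf v}

/-- The ancestral matrix `C(T)`, indexed by the leaves of `T`, whose
`(v, w)` entry is the ancestral level `ℓ(v ∨ w)`. -/
noncomputable def ancMatrix (T : TreeOn V) : Matrix T.Leaf T.Leaf ℝ :=
  Matrix.of fun v w => (T.lcaLevel v.1 w.1 : ℝ)

/-- The ancestral spectral radius `ρ_C(T)`: the largest eigenvalue of `C(T)`. -/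
noncomputable def rhoC (T : TreeOn V) : ℝ :=
  sSup {μ : ℝ | ∃ x : T.Leaf → ℝ, x ≠ 0 ∧ T.ancMatrix.mulVec x = μ • x}

/-- The underlying simple graph of the tree: each non-root vertex is joined
to its parent. -/
def graph (T : TreeOn V) : SimpleGraph V :=
  SimpleGraph.fromRel fun u v => T.parent u = v ∧ u ≠ v

/-- The number of children (outdegree) of a vertex. -/
def childCount (T : TreeOn V) (v : V) : ℕ :=
  (Finset.univ.filter fun u => T.parent u = v ∧ u ≠ v).card

end TreeOn

namespace TreeOn

variable {V : Type} [Fintype V] [DecidableEq V]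

/-- A complete `d`-ary tree: every internal vertex has exactly `d` children and
all leaves lie on the same level. -/
def IsCompleteDary (T : TreeOn V) (d : ℕ) : Prop :=
  (∀ v, ¬ T.IsLeaf v → T.childCount v = d) ∧
    ∀ v w : T.Leaf, T.level v.1 = T.level w.1

end TreeOn

/-!
The entry `ℓ(v ∨ w)` counts the non-root common ancestors of the leaves `v` and `w`, so
`𝟙ᵀ C 𝟙 = ∑_{u ≠ r} n_u²`, where `n_u` is the number of leaves below `u`, and the Rayleigh
quotient of `𝟙` gives `L · ρ_C ≥ ∑_{u ≠ r} n_u²`. Since `n_u` is the sum of `n_c` over the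
children `c` of `u`, Cauchy–Schwarz gives `n_u² ≤ Δ ∑_c n_c²` at every internal vertex, and
summing over internal vertices yields `(Δ - 1) ∑_{u ≠ r} n_u² ≥ L² - L`.

Equality forces every internal vertex to have `Δ` children carrying equally many leaves, so
`n_{parent c} = Δ n_c` and every leaf lies at depth `log_Δ L`. Conversely, in a complete
`Δ`-ary tree of height `h` every row of `C` sums to `1 + Δ + ⋯ + Δ^(h-1) = (L - 1)/(Δ - 1)`,
which by Gershgorin bounds every eigenvalue of the nonnegative matrix `C`.
-/

open Finset

lemma Finset.card_mul_eq_sum_of_sq_sum_eq {ι R : Type*} [Field R] [LinearOrder R]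
    [IsStrictOrderedRing R] {s : Finset ι} {f : ι → R}
    (h : (∑ i ∈ s, f i) ^ 2 = #s * ∑ i ∈ s, f i ^ 2) {i : ι} (hi : i ∈ s) :
    #s * f i = ∑ j ∈ s, f j := by
  set S := ∑ k ∈ s, f k
  have key : ∑ j ∈ s, (#s * f j - S) ^ 2 = 0 := by
    have hexp : ∀ j, (#s * f j - S) ^ 2 = (#s : R) ^ 2 * f j ^ 2 - 2 * #s * S * f j + S ^ 2 :=
      fun j => by ring
    simp_rw [hexp, sum_add_distrib, sum_sub_distrib, ← mul_sum, sum_const, nsmul_eq_mul]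
    linear_combination (-(#s : R)) * h
  exact sub_eq_zero.1 (pow_eq_zero_iff two_ne_zero |>.1
    ((sum_eq_zero_iff_of_nonneg fun j _ => sq_nonneg _).1 key i hi))

namespace Matrix

variable {ι : Type*} [Fintype ι] [DecidableEq ι] {A : Matrix ι ι ℝ}

lemma eigenvalue_le_of_nonneg_of_sum_row_le (hA : ∀ i j, 0 ≤ A i j) {r : ℝ}
    (hr : ∀ i, ∑ j, A i j ≤ r) {μ : ℝ} {x : ι → ℝ} (hx : x ≠ 0) (hμ : A *ᵥ x = μ • x) :
    μ ≤ r := by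
  obtain ⟨k, hk⟩ := eigenvalue_mem_ball (A := A)
    (Module.End.hasEigenvalue_of_hasEigenvector ⟨Module.End.mem_eigenspace_iff.2 hμ, hx⟩)
  rw [Metric.mem_closedBall, Real.dist_eq] at hk
  have hrow : A k k + ∑ j ∈ univ.erase k, ‖A k j‖ = ∑ j, A k j := by
    simp_rw [Real.norm_of_nonneg (hA k _), add_sum_erase _ _ (mem_univ k)]
  linarith [le_abs_self (μ - A k k), hr k]

lemma IsHermitian.exists_eigenvalue_rayleigh_le (hA : A.IsHermitian) {x : ι → ℝ} (hx : x ≠ 0) :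
    ∃ μ, (∃ y, y ≠ 0 ∧ A *ᵥ y = μ • y) ∧ x ⬝ᵥ (A *ᵥ x) ≤ μ * (x ⬝ᵥ x) := by
  set f := toEuclideanLin A
  have hf : f.IsSymmetric := isSymmetric_toEuclideanLin_iff.2 hA
  set z : EuclideanSpace ℝ ι := WithLp.toLp 2 x
  have hz : z ≠ 0 := fun h => hx (congrArg WithLp.ofLp h)
  have : Nontrivial (EuclideanSpace ℝ ι) := ⟨⟨z, 0, hz⟩⟩
  -- the supremum of the Rayleigh quotient is attained, at an eigenvector
  obtain ⟨y, hy, hy0⟩ := hf.hasEigenvalue_iSup_of_finiteDimensional.exists_hasEigenvector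
  refine ⟨_, ⟨WithLp.ofLp y, fun h => hy0 (WithLp.ofLp_injective 2 (by simpa using h)),
    congrArg WithLp.ofLp (Module.End.mem_eigenspace_iff.1 hy)⟩, ?_⟩
  have hbdd : BddAbove (Set.range fun w : {w : EuclideanSpace ℝ ι // w ≠ 0} =>
      RCLike.re (inner ℝ (f w) (w : EuclideanSpace ℝ ι)) / ‖(w : EuclideanSpace ℝ ι)‖ ^ 2) := by
    refine ⟨‖LinearMap.toContinuousLinearMap f‖, ?_⟩
    rintro _ ⟨w, rfl⟩
    exact (le_abs_self _).trans ((LinearMap.toContinuousLinearMap f).rayleighQuotient_le_norm w)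
  have hle := le_ciSup hbdd ⟨z, hz⟩
  have hnorm : ‖z‖ ^ 2 = x ⬝ᵥ x := by
    rw [← real_inner_self_eq_norm_sq, EuclideanSpace.inner_toLp_toLp, star_trivial]
  have hinner : RCLike.re (inner ℝ (f z) z) = x ⬝ᵥ (A *ᵥ x) := by
    simp [f, z, EuclideanSpace.inner_toLp_toLp]
  simp only at hle
  rwa [hinner, hnorm, div_le_iff₀ (by rw [← hnorm]; positivity)] at hle

end Matrix

namespace TreeOn

variable {V : Type} [Fintype V] [DecidableEq V]

section Ancestors

variable {T : TreeOn V} {u v w : V} {k : ℕ}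

lemma parent_iterate_level (v : V) : T.parent^[T.level v] v = T.root :=
  Nat.find_spec (T.reaches v)

lemma level_le_of_parent_iterate_eq_root (h : T.parent^[k] v = T.root) : T.level v ≤ k :=
  Nat.find_min' _ h

lemma parent_iterate_of_level_le (h : T.level v ≤ k) : T.parent^[k] v = T.root := by
  rw [← Nat.sub_add_cancel h, Function.iterate_add_apply, T.parent_iterate_level,
    Function.iterate_fixed T.parent_root]

lemma level_eq_zero_iff : T.level v = 0 ↔ v = T.root :=
  ⟨fun h => by simpa [h] using T.parent_iterate_level v,
    fun h => Nat.le_zero.1 (level_le_of_parent_iterate_eq_root (k := 0) (by simpa using h))⟩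

lemma level_parent_iterate (h : k ≤ T.level v) :
    T.level (T.parent^[k] v) = T.level v - k := by
  refine le_antisymm (level_le_of_parent_iterate_eq_root ?_) ?_
  · rw [← Function.iterate_add_apply, Nat.sub_add_cancel h, T.parent_iterate_level]
  · have := level_le_of_parent_iterate_eq_root (T := T) (v := v)
      (k := T.level (T.parent^[k] v) + k) (by rw [Function.iterate_add_apply,
        T.parent_iterate_level])
    omega

lemma level_lt_card (v : V) : T.level v < Fintype.card V := by
  have hinj : Function.Injective fun j : Fin (T.level v + 1) => T.parent^[j] v := by
    intro a b hab
    have ha := level_parent_iterate (T := T) (v := v) (Nat.lt_succ_iff.1 a.2)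
    have hb := level_parent_iterate (T := T) (v := v) (Nat.lt_succ_iff.1 b.2)
    simp only at hab
    rw [hab, hb] at ha
    omega
  simpa using Fintype.card_le_of_injective _ hinj

lemma isAncestor_iff : T.IsAncestor u v ↔ ∃ k, T.parent^[k] v = u := by
  refine ⟨fun ⟨k, _, h⟩ => ⟨k, h⟩, fun ⟨k, h⟩ => ?_⟩
  rcases le_or_gt k (T.level v) with hk | hk
  · exact ⟨k, hk.trans (level_lt_card v).le, h⟩
  · refine ⟨T.level v, (level_lt_card v).le, ?_⟩
    rw [T.parent_iterate_level, ← h, parent_iterate_of_level_le hk.le]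

lemma isAncestor_parent_iterate (v : V) (k : ℕ) : T.IsAncestor (T.parent^[k] v) v :=
  isAncestor_iff.2 ⟨k, rfl⟩

lemma isAncestor_refl (v : V) : T.IsAncestor v v :=
  isAncestor_parent_iterate v 0

lemma isAncestor_root (v : V) : T.IsAncestor T.root v :=
  isAncestor_iff.2 ⟨_, T.parent_iterate_level v⟩

lemma IsAncestor.trans (huv : T.IsAncestor u v) (hvw : T.IsAncestor v w) :
    T.IsAncestor u w := by
  obtain ⟨k, rfl⟩ := isAncestor_iff.1 huv
  obtain ⟨m, rfl⟩ := isAncestor_iff.1 hvw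
  exact isAncestor_iff.2 ⟨k + m, Function.iterate_add_apply _ _ _ _⟩

lemma IsAncestor.parent_iterate_level_sub (h : T.IsAncestor u v) :
    T.parent^[T.level v - T.level u] v = u := by
  obtain ⟨k, rfl⟩ := isAncestor_iff.1 h
  rcases le_or_gt k (T.level v) with hk | hk
  · rw [level_parent_iterate hk, Nat.sub_sub_self hk]
  · rw [parent_iterate_of_level_le hk.le, level_eq_zero_iff.2 rfl, Nat.sub_zero,
      T.parent_iterate_level]

lemma IsAncestor.level_le (h : T.IsAncestor u v) : T.level u ≤ T.level v := by
  obtain ⟨k, rfl⟩ := isAncestor_iff.1 h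
  rcases le_or_gt k (T.level v) with hk | hk
  · rw [level_parent_iterate hk]; omega
  · rw [parent_iterate_of_level_le hk.le, level_eq_zero_iff.2 rfl]; omega

lemma IsAncestor.eq_of_level_eq {u' : V} (hu : T.IsAncestor u v) (hu' : T.IsAncestor u' v)
    (h : T.level u = T.level u') : u = u' := by
  rw [← hu.parent_iterate_level_sub, ← hu'.parent_iterate_level_sub, h]

lemma exists_isAncestor_level_eq {j : ℕ} (h : j ≤ T.level v) :
    ∃ u, T.IsAncestor u v ∧ T.level u = j :=
  ⟨_, isAncestor_parent_iterate v (T.level v - j), by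
    rw [level_parent_iterate (Nat.sub_le _ _)]; omega⟩

end Ancestors

def commonAncestors (T : TreeOn V) (v w : V) : Finset V :=
  univ.filter fun u => T.IsAncestor u v ∧ T.IsAncestor u w

section CommonAncestors

variable {T : TreeOn V}

lemma mem_commonAncestors {u v w : V} :
    u ∈ T.commonAncestors v w ↔ T.IsAncestor u v ∧ T.IsAncestor u w := by
  simp [commonAncestors]

lemma image_level_commonAncestors (v w : V) :
    (T.commonAncestors v w).image T.level = range (T.lcaLevel v w + 1) := by
  obtain ⟨a, ha, hsup⟩ := exists_mem_eq_sup (T.commonAncestors v w)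
    ⟨T.root, mem_commonAncestors.2 ⟨isAncestor_root v, isAncestor_root w⟩⟩ T.level
  have hlca : T.lcaLevel v w = T.level a := hsup
  ext j
  simp only [mem_image, mem_range, Nat.lt_succ_iff]
  constructor
  · rintro ⟨u, hu, rfl⟩
    exact le_sup (f := T.level) hu
  · intro hj
    obtain ⟨u, hua, rfl⟩ := exists_isAncestor_level_eq (hlca ▸ hj)
    obtain ⟨hav, haw⟩ := mem_commonAncestors.1 ha
    exact ⟨u, mem_commonAncestors.2 ⟨hua.trans hav, hua.trans haw⟩, rfl⟩

lemma card_commonAncestors (v w : V) : #(T.commonAncestors v w) = T.lcaLevel v w + 1 := by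
  rw [← card_range (T.lcaLevel v w + 1), ← image_level_commonAncestors,
    card_image_of_injOn fun a ha b hb hab =>
      (mem_commonAncestors.1 ha).1.eq_of_level_eq (mem_commonAncestors.1 hb).1 hab]

lemma lcaLevel_eq_card (v w : V) :
    T.lcaLevel v w =
      #((univ.erase T.root).filter fun u => T.IsAncestor u v ∧ T.IsAncestor u w) := by
  rw [filter_erase, ← commonAncestors, card_erase_of_mem
    (mem_commonAncestors.2 ⟨isAncestor_root v, isAncestor_root w⟩), card_commonAncestors]
  rfl

lemma lcaLevel_comm (v w : V) : T.lcaLevel v w = T.lcaLevel w v := by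
  simp only [lcaLevel, and_comm]

end CommonAncestors

def children (T : TreeOn V) (u : V) : Finset V :=
  univ.filter fun c => T.parent c = u ∧ c ≠ u

def leafCount (T : TreeOn V) (u : V) : ℕ :=
  #(univ.filter fun v : T.Leaf => T.IsAncestor u v)

section Children

variable {T : TreeOn V} {c u v : V}

lemma mem_children : c ∈ T.children u ↔ T.parent c = u ∧ c ≠ u := by
  simp [children]

lemma childCount_eq_card_children (u : V) : T.childCount u = #(T.children u) := rfl

lemma parent_eq_self_iff : T.parent v = v ↔ v = T.root := by
  refine ⟨fun h => ?_, fun h => h ▸ T.parent_root⟩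
  obtain ⟨k, hk⟩ := T.reaches v
  rwa [Function.iterate_fixed h] at hk

lemma not_isLeaf_iff : ¬ T.IsLeaf u ↔ (T.children u).Nonempty := by
  simp [IsLeaf, Finset.Nonempty, mem_children]

lemma isAncestor_of_mem_children (h : c ∈ T.children u) : T.IsAncestor u c :=
  (mem_children.1 h).1 ▸ isAncestor_parent_iterate c 1

lemma level_of_mem_children (h : c ∈ T.children u) : T.level c = T.level u + 1 := by
  obtain ⟨rfl, hc⟩ := mem_children.1 h
  have hpos : 1 ≤ T.level c := Nat.one_le_iff_ne_zero.2 fun h0 =>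
    hc (parent_eq_self_iff.2 (level_eq_zero_iff.1 h0)).symm
  have := level_parent_iterate (T := T) hpos
  rw [Function.iterate_one] at this
  omega

lemma exists_mem_children_isAncestor (h : T.IsAncestor u v) (hne : v ≠ u) :
    ∃ c ∈ T.children u, T.IsAncestor c v := by
  have hk := h.parent_iterate_level_sub
  set k := T.level v - T.level u
  have hk0 : k ≠ 0 := fun h0 => hne (by rwa [h0] at hk)
  have hlevel := level_parent_iterate (T := T) (v := v) (k := k - 1) (by omega)
  refine ⟨T.parent^[k - 1] v, mem_children.2 ⟨?_, fun he => ?_⟩, isAncestor_parent_iterate _ _⟩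
  · rwa [← Function.iterate_succ_apply' T.parent, Nat.succ_eq_add_one,
      Nat.sub_add_cancel (Nat.one_le_iff_ne_zero.2 hk0)]
  · have := h.level_le
    rw [he] at hlevel
    omega

lemma eq_of_mem_children_of_isAncestor {c' : V} (hc : c ∈ T.children u)
    (hc' : c' ∈ T.children u) (hv : T.IsAncestor c v) (hv' : T.IsAncestor c' v) : c = c' :=
  hv.eq_of_level_eq hv' (by rw [level_of_mem_children hc, level_of_mem_children hc'])

lemma IsLeaf.eq_of_isAncestor (hu : T.IsLeaf u) (h : T.IsAncestor u v) : v = u := by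
  by_contra hne
  obtain ⟨c, hc, -⟩ := exists_mem_children_isAncestor h hne
  exact not_isLeaf_iff.2 ⟨c, hc⟩ hu

lemma exists_isLeaf_isAncestor (u : V) : ∃ v, T.IsLeaf v ∧ T.IsAncestor u v := by
  obtain ⟨v, hv, hmax⟩ := (univ.filter (T.IsAncestor u)).exists_max_image T.level
    ⟨u, by simpa using isAncestor_refl u⟩
  rw [mem_filter] at hv
  refine ⟨v, fun c hc => by_contra fun hcv => ?_, hv.2⟩
  have hchild : c ∈ T.children v := mem_children.2 ⟨hc, hcv⟩
  have := hmax c (by simpa using hv.2.trans (isAncestor_of_mem_children hchild))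
  rw [level_of_mem_children hchild] at this
  omega

lemma leafCount_of_isLeaf (hu : T.IsLeaf u) : T.leafCount u = 1 := by
  rw [leafCount, card_eq_one]
  refine ⟨⟨u, hu⟩, eq_singleton_iff_unique_mem.2 ⟨by simpa using isAncestor_refl u, ?_⟩⟩
  intro v hv
  exact Subtype.ext (hu.eq_of_isAncestor (mem_filter.1 hv).2)

lemma one_le_leafCount (u : V) : 1 ≤ T.leafCount u := by
  obtain ⟨v, hv, huv⟩ := exists_isLeaf_isAncestor (T := T) u
  exact card_pos.2 ⟨⟨v, hv⟩, by simpa using huv⟩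

lemma leafCount_root : T.leafCount T.root = Fintype.card T.Leaf := by
  simp [leafCount, isAncestor_root]

lemma leafCount_eq_sum_children (hu : ¬ T.IsLeaf u) :
    T.leafCount u = ∑ c ∈ T.children u, T.leafCount c := by
  simp only [leafCount]
  rw [← card_biUnion]
  · congr 1
    ext v
    simp only [mem_filter, mem_univ, true_and, mem_biUnion]
    refine ⟨fun h => exists_mem_children_isAncestor h fun he => hu (he ▸ v.2), ?_⟩
    rintro ⟨c, hc, hcv⟩
    exact (isAncestor_of_mem_children hc).trans hcv
  · intro c hc c' hc' hne
    refine disjoint_left.2 fun v hv hv' => hne ?_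
    exact eq_of_mem_children_of_isAncestor hc hc' (mem_filter.1 hv).2 (mem_filter.1 hv').2

lemma sum_erase_root_eq_sum_sum_children {M : Type*} [AddCommMonoid M] (f : V → M) :
    ∑ c ∈ univ.erase T.root, f c = ∑ u ∈ univ.filter (¬ T.IsLeaf ·), ∑ c ∈ T.children u, f c := by
  refine (sum_fiberwise_of_maps_to (g := T.parent) (fun c hc => ?_) f).symm.trans
    (sum_congr rfl fun u _ => sum_congr (ext fun c => ?_) fun _ _ => rfl)
  · simp only [mem_filter, mem_univ, true_and]
    exact fun hleaf => (mem_erase.1 hc).1 (parent_eq_self_iff.1 (hleaf c rfl).symm)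
  · simp only [mem_filter, mem_erase, mem_univ, and_true, mem_children]
    constructor
    · rintro ⟨hc, rfl⟩
      exact ⟨rfl, fun h => hc (parent_eq_self_iff.1 h.symm)⟩
    · rintro ⟨rfl, hc⟩
      exact ⟨fun h => hc (h ▸ T.parent_root).symm, rfl⟩

end Children

section AncestralMatrix

variable (T : TreeOn V)

lemma sum_lcaLevel_row (v : V) :
    ∑ w : T.Leaf, T.lcaLevel v w =
      ∑ u ∈ (univ.erase T.root).filter (T.IsAncestor · v), T.leafCount u := by
  simp_rw [lcaLevel_eq_card, ← filter_filter, card_filter]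
  rw [sum_comm]
  exact sum_congr rfl fun u _ => (card_filter _ _).symm

lemma sum_ancMatrix_row (v : T.Leaf) :
    ∑ w, T.ancMatrix v w =
      ∑ u ∈ (univ.erase T.root).filter (T.IsAncestor · v), (T.leafCount u : ℝ) := by
  have := T.sum_lcaLevel_row v
  simp only [ancMatrix, of_apply]
  exact_mod_cast this

noncomputable def leafCountSqSum : ℝ :=
  ∑ u ∈ univ.erase T.root, (T.leafCount u : ℝ) ^ 2

lemma one_dotProduct_ancMatrix_mulVec_one : 1 ⬝ᵥ T.ancMatrix *ᵥ 1 = T.leafCountSqSum := by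
  simp only [mulVec, dotProduct, Pi.one_apply, mul_one, one_mul, sum_ancMatrix_row, sum_filter]
  rw [sum_comm]
  refine sum_congr rfl fun u _ => ?_
  rw [← sum_filter, sum_const, nsmul_eq_mul, sq]
  rfl

lemma ancMatrix_nonneg (v w : T.Leaf) : 0 ≤ T.ancMatrix v w :=
  Nat.cast_nonneg _

lemma isHermitian_ancMatrix : T.ancMatrix.IsHermitian := by
  ext v w
  simp [ancMatrix, lcaLevel_comm]

instance : Nonempty T.Leaf :=
  let ⟨v, hv, _⟩ := exists_isLeaf_isAncestor (T := T) T.root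
  ⟨⟨v, hv⟩⟩

lemma rhoC_le_of_sum_row_le {r : ℝ} (hr : ∀ v, ∑ w, T.ancMatrix v w ≤ r) : T.rhoC ≤ r := by
  have hr0 : 0 ≤ r := by
    obtain ⟨v⟩ : Nonempty T.Leaf := inferInstance
    exact (sum_nonneg fun w _ => T.ancMatrix_nonneg v w).trans (hr v)
  exact Real.sSup_le (fun μ ⟨x, hx, hμ⟩ =>
    eigenvalue_le_of_nonneg_of_sum_row_le T.ancMatrix_nonneg hr hx hμ) hr0

lemma leafCountSqSum_le_rhoC_mul_card :
    T.leafCountSqSum ≤ T.rhoC * Fintype.card T.Leaf := by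
  obtain ⟨μ, hμ, hle⟩ := T.isHermitian_ancMatrix.exists_eigenvalue_rayleigh_le
    (one_ne_zero : (1 : T.Leaf → ℝ) ≠ 0)
  rw [one_dotProduct_ancMatrix_mulVec_one, one_dotProduct_one] at hle
  have hbdd : BddAbove {μ : ℝ | ∃ x : T.Leaf → ℝ, x ≠ 0 ∧ T.ancMatrix.mulVec x = μ • x} :=
    ⟨_, fun μ ⟨x, hx, hμ⟩ => eigenvalue_le_of_nonneg_of_sum_row_le T.ancMatrix_nonneg
      (fun v => single_le_sum (fun v _ => sum_nonneg fun w _ => T.ancMatrix_nonneg v w)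
        (mem_univ v)) hx hμ⟩
  exact hle.trans (mul_le_mul_of_nonneg_right (le_csSup hbdd hμ) (Nat.cast_nonneg _))

end AncestralMatrix

section LeafCountSquares

variable (T : TreeOn V)

lemma sub_one_mul_leafCountSqSum_sub (Δ : ℝ) :
    (Δ - 1) * T.leafCountSqSum - ((Fintype.card T.Leaf : ℝ) ^ 2 - Fintype.card T.Leaf) =
      ∑ u ∈ univ.filter (¬ T.IsLeaf ·),
        (Δ * ∑ c ∈ T.children u, (T.leafCount c : ℝ) ^ 2 - (T.leafCount u : ℝ) ^ 2) := by
  have hroot : ∑ u, (T.leafCount u : ℝ) ^ 2 =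
      T.leafCountSqSum + (Fintype.card T.Leaf : ℝ) ^ 2 := by
    rw [← sum_erase_add _ _ (mem_univ T.root), leafCount_root, leafCountSqSum]
  have hleaves : ∑ u, (T.leafCount u : ℝ) ^ 2 =
      Fintype.card T.Leaf + ∑ u ∈ univ.filter (¬ T.IsLeaf ·), (T.leafCount u : ℝ) ^ 2 := by
    rw [← sum_filter_add_sum_filter_not univ T.IsLeaf,
      sum_congr rfl fun u hu => by rw [leafCount_of_isLeaf (mem_filter.1 hu).2]]
    simp [Fintype.card_subtype]
  rw [sum_sub_distrib, ← mul_sum, ← sum_erase_root_eq_sum_sum_children, ← leafCountSqSum]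
  linarith

variable {T} {u : V} {Δ : ℕ}

lemma sq_leafCount_le (hu : ¬ T.IsLeaf u) (hdeg : T.childCount u ≤ Δ) :
    (T.leafCount u : ℝ) ^ 2 ≤ Δ * ∑ c ∈ T.children u, (T.leafCount c : ℝ) ^ 2 := by
  rw [leafCount_eq_sum_children hu, Nat.cast_sum]
  calc _ ≤ #(T.children u) * ∑ c ∈ T.children u, (T.leafCount c : ℝ) ^ 2 :=
        sq_sum_le_card_mul_sum_sq
    _ ≤ Δ * ∑ c ∈ T.children u, (T.leafCount c : ℝ) ^ 2 := by
        gcongr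
        exact_mod_cast hdeg

lemma childCount_eq_of_sq_leafCount_eq (hu : ¬ T.IsLeaf u) (hdeg : T.childCount u ≤ Δ)
    (h : (T.leafCount u : ℝ) ^ 2 = Δ * ∑ c ∈ T.children u, (T.leafCount c : ℝ) ^ 2) :
    T.childCount u = Δ ∧ ∀ c ∈ T.children u, Δ * T.leafCount c = T.leafCount u := by
  have hsum : (T.leafCount u : ℝ) = ∑ c ∈ T.children u, (T.leafCount c : ℝ) := by
    exact_mod_cast leafCount_eq_sum_children hu
  have hpos : 0 < ∑ c ∈ T.children u, (T.leafCount c : ℝ) ^ 2 := by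
    refine sum_pos (fun c _ => ?_) (not_isLeaf_iff.1 hu)
    have : (0 : ℝ) < T.leafCount c := by exact_mod_cast one_le_leafCount c
    positivity
  have hcard : (#(T.children u) : ℝ) = Δ := by
    refine le_antisymm (by exact_mod_cast hdeg) (le_of_mul_le_mul_right ?_ hpos)
    rw [← h, hsum]
    exact sq_sum_le_card_mul_sum_sq
  refine ⟨by exact_mod_cast hcard, fun c hc => ?_⟩
  have := card_mul_eq_sum_of_sq_sum_eq (by rw [← hsum, h, hcard]) hc
  rw [hcard, ← hsum] at this
  exact_mod_cast this

variable (T)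

lemma sq_card_sub_card_le (hdeg : ∀ u, T.childCount u ≤ Δ) :
    (Fintype.card T.Leaf : ℝ) ^ 2 - Fintype.card T.Leaf ≤ (Δ - 1) * T.leafCountSqSum := by
  have := T.sub_one_mul_leafCountSqSum_sub Δ
  have : 0 ≤ ∑ u ∈ univ.filter (¬ T.IsLeaf ·),
      (Δ * ∑ c ∈ T.children u, (T.leafCount c : ℝ) ^ 2 - (T.leafCount u : ℝ) ^ 2) :=
    sum_nonneg fun u hu => sub_nonneg.2 (sq_leafCount_le (mem_filter.1 hu).2 (hdeg u))
  linarith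

lemma childCount_eq_of_sub_one_mul_leafCountSqSum_eq (hdeg : ∀ u, T.childCount u ≤ Δ)
    (h : (Δ - 1) * T.leafCountSqSum = (Fintype.card T.Leaf : ℝ) ^ 2 - Fintype.card T.Leaf)
    (hu : ¬ T.IsLeaf u) :
    T.childCount u = Δ ∧ ∀ c ∈ T.children u, Δ * T.leafCount c = T.leafCount u := by
  have hzero := T.sub_one_mul_leafCountSqSum_sub Δ
  rw [h, sub_self, eq_comm, sum_eq_zero_iff_of_nonneg fun u hu =>
    sub_nonneg.2 (sq_leafCount_le (mem_filter.1 hu).2 (hdeg u))] at hzero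
  exact childCount_eq_of_sq_leafCount_eq hu (hdeg u)
    (sub_eq_zero.1 (hzero u (by simpa using hu))).symm

end LeafCountSquares

section Complete

variable {T : TreeOn V} {Δ : ℕ}

lemma sum_filter_isAncestor_erase_root {M : Type*} [AddCommMonoid M] (f : V → M) (v : V) :
    ∑ u ∈ (univ.erase T.root).filter (T.IsAncestor · v), f u =
      ∑ k ∈ range (T.level v), f (T.parent^[k] v) := by
  refine Eq.trans ?_ (sum_image (g := fun k => T.parent^[k] v) fun a ha b hb hab => by
    have ha' := level_parent_iterate (T := T) (v := v) (mem_range.1 ha).le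
    have hb' := level_parent_iterate (T := T) (v := v) (mem_range.1 hb).le
    simp only at hab
    rw [hab, hb'] at ha'
    have := mem_range.1 ha
    have := mem_range.1 hb
    omega)
  refine sum_congr (ext fun u => ?_) fun _ _ => rfl
  simp only [mem_filter, mem_erase, mem_univ, and_true, mem_image, mem_range]
  constructor
  · rintro ⟨hu, huv⟩
    have := huv.level_le
    have := mt level_eq_zero_iff.1 hu
    exact ⟨_, by omega, huv.parent_iterate_level_sub⟩
  · rintro ⟨k, hk, rfl⟩
    refine ⟨fun h => ?_, isAncestor_parent_iterate v k⟩
    have := level_parent_iterate (T := T) (v := v) hk.le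
    rw [h, level_eq_zero_iff.2 rfl] at this
    omega

lemma leafCount_parent_iterate
    (h : ∀ u, ¬ T.IsLeaf u → ∀ c ∈ T.children u, Δ * T.leafCount c = T.leafCount u)
    {v : V} {k : ℕ} (hk : k ≤ T.level v) :
    T.leafCount (T.parent^[k] v) = Δ ^ k * T.leafCount v := by
  induction k with
  | zero => simp
  | succ k ih =>
    set c := T.parent^[k] v
    have hc : c ∈ T.children (T.parent c) := mem_children.2 ⟨rfl, fun hc => by
      have := level_parent_iterate (T := T) (v := v) (k := k) (by omega)
      rw [level_eq_zero_iff.2 (parent_eq_self_iff.1 hc.symm)] at this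
      omega⟩
    rw [Function.iterate_succ_apply', ← h _ (not_isLeaf_iff.2 ⟨c, hc⟩) c hc, ih (by omega),
      pow_succ']
    ring

lemma isCompleteDary_of_forall_childCount_eq (hΔ : 2 ≤ Δ)
    (h : ∀ u, ¬ T.IsLeaf u →
      T.childCount u = Δ ∧ ∀ c ∈ T.children u, Δ * T.leafCount c = T.leafCount u) :
    T.IsCompleteDary Δ := by
  have hpow (v : T.Leaf) : Δ ^ T.level v = Fintype.card T.Leaf := by
    have := leafCount_parent_iterate (fun u hu => (h u hu).2) (le_refl (T.level v))
    rwa [T.parent_iterate_level, leafCount_root, leafCount_of_isLeaf v.2, mul_one,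
      eq_comm] at this
  exact ⟨fun u hu => (h u hu).1,
    fun v w => Nat.pow_right_injective hΔ ((hpow v).trans (hpow w).symm)⟩

lemma IsCompleteDary.level_le (hT : T.IsCompleteDary Δ) (v : T.Leaf) (u : V) :
    T.level u ≤ T.level v := by
  obtain ⟨w, hw, huw⟩ := exists_isLeaf_isAncestor (T := T) u
  exact huw.level_le.trans_eq (hT.2 ⟨w, hw⟩ v)

lemma IsCompleteDary.leafCount_eq (hT : T.IsCompleteDary Δ) (v : T.Leaf) (u : V) :
    T.leafCount u = Δ ^ (T.level v - T.level u) := by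
  suffices ∀ d u, T.level v - T.level u = d → T.leafCount u = Δ ^ d from this _ u rfl
  intro d
  induction d with
  | zero =>
    intro u hu
    have hleaf : T.IsLeaf u := by
      by_contra hl
      obtain ⟨c, hc⟩ := not_isLeaf_iff.1 hl
      have := level_of_mem_children hc
      have := hT.level_le v c
      omega
    rw [leafCount_of_isLeaf hleaf, pow_zero]
  | succ d ih =>
    intro u hu
    have hleaf : ¬ T.IsLeaf u := fun hl => by
      have : T.level u = T.level v := hT.2 ⟨u, hl⟩ v
      omega
    rw [leafCount_eq_sum_children hleaf, sum_congr rfl fun c hc => ih c (by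
      have := level_of_mem_children hc; omega), sum_const, ← childCount_eq_card_children,
      hT.1 u hleaf, smul_eq_mul, pow_succ']

lemma IsCompleteDary.sum_ancMatrix_row (hΔ : Δ ≠ 1) (hT : T.IsCompleteDary Δ) (v : T.Leaf) :
    ∑ w, T.ancMatrix v w = ((Fintype.card T.Leaf : ℝ) - 1) / ((Δ : ℝ) - 1) := by
  have hcard : Fintype.card T.Leaf = Δ ^ T.level v := by
    rw [← leafCount_root, hT.leafCount_eq v, level_eq_zero_iff.2 rfl, Nat.sub_zero]
  rw [T.sum_ancMatrix_row, sum_filter_isAncestor_erase_root, hcard, Nat.cast_pow,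
    ← geom_sum_eq (by exact_mod_cast hΔ)]
  refine sum_congr rfl fun k hk => ?_
  rw [hT.leafCount_eq v, level_parent_iterate (mem_range.1 hk).le,
    Nat.sub_sub_self (mem_range.1 hk).le, Nat.cast_pow]

end Complete

end TreeOn

/-- If every vertex of `T` has at most `Δ ≥ 2` children, then
`ρ_C(T) ≥ (L(T) − 1)/(Δ − 1)`, with equality iff `T` is a complete `Δ`-ary
tree. -/
theorem rhoC_ge_of_outdegree_le
    {V : Type} [Fintype V] [DecidableEq V] (T : TreeOn V) (Δ : ℕ)
    (hΔ : 2 ≤ Δ) (hdeg : ∀ v, T.childCount v ≤ Δ) :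
    ((Fintype.card T.Leaf : ℝ) - 1) / ((Δ : ℝ) - 1) ≤ T.rhoC ∧
      (T.rhoC = ((Fintype.card T.Leaf : ℝ) - 1) / ((Δ : ℝ) - 1) ↔
        T.IsCompleteDary Δ) := by
  set L : ℝ := (Fintype.card T.Leaf : ℝ)
  have hL : 1 ≤ L := Nat.one_le_cast.2 Fintype.card_pos
  have hΔ1 : (0 : ℝ) < Δ - 1 := by
    have : (2 : ℝ) ≤ Δ := by exact_mod_cast hΔ
    linarith
  have hupper := T.leafCountSqSum_le_rhoC_mul_card
  have hlower := T.sq_card_sub_card_le hdeg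
  have hbound : (L - 1) / (Δ - 1) ≤ T.rhoC := by
    rw [div_le_iff₀ hΔ1]
    nlinarith
  refine ⟨hbound, fun heq => ?_, fun hT => ?_⟩
  · have htight : (Δ - 1) * T.leafCountSqSum = L ^ 2 - L := by
      rw [heq, div_mul_eq_mul_div, le_div_iff₀ hΔ1] at hupper
      linarith
    exact TreeOn.isCompleteDary_of_forall_childCount_eq hΔ fun u hu =>
      T.childCount_eq_of_sub_one_mul_leafCountSqSum_eq hdeg htight hu
  · exact le_antisymm (T.rhoC_le_of_sum_row_le fun v => (hT.sum_ancMatrix_row (by omega) v).le)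
      hbound
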